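/- Let α ≥ 0, β ≥ 0, γ ≥ 0, σ > 0 with ασ ≥ γ². Then for every real-valued u ∈ C_c^∞(ℝ³×ℝ³): Σ_{i=1}^{3} ∫_{ℝ³}∫_{ℝ³} v_i⁴ u(x,v) (Au)(x,v) dx dv ≤ 9σ ∫∫ u² dx dv + (3σ − β/2) Σ_{i=1}^{3} ∫∫ v_i⁴ u² dx dv. -/

import Mathlib

open MeasureTheory Real Filter ENNReal

noncomputable section

abbrev E3 := EuclideanSpace ℝ (Fin 3)

/-- The `i`-th standard basis vector of `ℝ³`. -/
def e3 (i : Fin 3) : E3 := EuclideanSpace.single i 1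

/-- The quantum Fokker-Planck generator
`Au = −v·∇_x u + β div_v(v u) + σ Δ_v u + 2γ div_v(∇_x u) + α Δ_x u`. -/
def Aop (α β γ σ : ℝ) (u : E3 × E3 → ℝ) (p : E3 × E3) : ℝ :=
  -(∑ i : Fin 3, p.2 i * fderiv ℝ u p (e3 i, 0))
    + β * (∑ i : Fin 3, fderiv ℝ (fun q : E3 × E3 => q.2 i * u q) p (0, e3 i))
    + σ * (∑ i : Fin 3, fderiv ℝ (fun q => fderiv ℝ u q (0, e3 i)) p (0, e3 i))
    + 2 * γ * (∑ i : Fin 3, fderiv ℝ (fun q => fderiv ℝ u q (e3 i, 0)) p (0, e3 i))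
    + α * (∑ i : Fin 3, fderiv ℝ (fun q => fderiv ℝ u q (e3 i, 0)) p (e3 i, 0))

instance : (volume : Measure (E3 × E3)).IsAddHaarMeasure :=
  Measure.prod.instIsAddHaarMeasure volume volume

def L3 (i : Fin 3) : (E3 × E3) →L[ℝ] ℝ :=
  (EuclideanSpace.proj i).comp (ContinuousLinearMap.snd ℝ E3 E3)

lemma L3_apply (i : Fin 3) (d : E3 × E3) : L3 i d = d.2 i := rfl

lemma hasFDerivAt_coord (i : Fin 3) (p : E3 × E3) :
    HasFDerivAt (fun q : E3 × E3 => q.2 i) (L3 i) p := (L3 i).hasFDerivAt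

lemma contDiff_coord (i : Fin 3) : ContDiff ℝ (⊤ : ℕ∞) (fun q : E3 × E3 => q.2 i) := (L3 i).contDiff

lemma hasFDerivAt_npow {f : E3 × E3 → ℝ} {f' : (E3 × E3) →L[ℝ] ℝ} {x : E3 × E3}
    (h : HasFDerivAt f f' x) :
    ∀ n : ℕ, HasFDerivAt (fun x => f x ^ n) (((n : ℝ) * f x ^ (n - 1)) • f') x
  | 0 => by simpa using hasFDerivAt_const (1 : ℝ) x
  | 1 => by simpa using h
  | (n + 2) => by
    have h2 : HasFDerivAt (fun x => f x ^ (n + 1) * f x) _ x := (hasFDerivAt_npow h (n + 1)).mul h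
    have : (fun x => f x ^ (n + 1) * f x) = fun x => f x ^ (n + 2) := by
      funext y; ring
    rw [this] at h2
    refine h2.congr_fderiv ?_
    rw [smul_smul, ← add_smul]
    congr 1
    push_cast
    ring

lemma fderiv_coord_pow (m : ℕ) (i : Fin 3) (p d : E3 × E3) :
    fderiv ℝ (fun q : E3 × E3 => (q.2 i)^m) p d = (m * (p.2 i)^(m-1)) * d.2 i := by
  rw [(hasFDerivAt_npow (hasFDerivAt_coord i p) m).fderiv]
  simp [L3_apply]

lemma fderiv_coord_pow_mul (m : ℕ) (i j : Fin 3) (p d : E3 × E3) :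
    fderiv ℝ (fun q : E3 × E3 => (q.2 i)^m * q.2 j) p d
      = (m * (p.2 i)^(m-1)) * d.2 i * p.2 j + (p.2 i)^m * d.2 j := by
  rw [(show HasFDerivAt (fun q : E3 × E3 => (q.2 i)^m * q.2 j) _ p from
    (hasFDerivAt_npow (hasFDerivAt_coord i p) m).mul (hasFDerivAt_coord j p)).fderiv]
  simp [L3_apply]; ring

lemma fderiv_coord_mul_fun (u : E3 × E3 → ℝ) (hu : ContDiff ℝ (⊤ : ℕ∞) u) (j : Fin 3) (p d : E3 × E3) :
    fderiv ℝ (fun q : E3 × E3 => q.2 j * u q) p d = d.2 j * u p + p.2 j * fderiv ℝ u p d := by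
  rw [(show HasFDerivAt (fun q : E3 × E3 => q.2 j * u q) _ p from
    (hasFDerivAt_coord j p).mul ((hu.differentiable (by simp)) p).hasFDerivAt).fderiv]
  simp [L3_apply]; ring

lemma fderiv_pow_mul_fun (u : E3 × E3 → ℝ) (hu : ContDiff ℝ (⊤ : ℕ∞) u) (m : ℕ) (i : Fin 3)
    (p d : E3 × E3) :
    fderiv ℝ (fun q : E3 × E3 => (q.2 i)^m * u q) p d
      = (m * (p.2 i)^(m-1)) * d.2 i * u p + (p.2 i)^m * fderiv ℝ u p d := by
  rw [(show HasFDerivAt (fun q : E3 × E3 => (q.2 i)^m * u q) _ p from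
    (hasFDerivAt_npow (hasFDerivAt_coord i p) m).mul
    ((hu.differentiable (by simp)) p).hasFDerivAt).fderiv]
  simp [L3_apply]; ring

lemma e3_apply (i j : Fin 3) : (e3 i : E3) j = if j = i then 1 else 0 := by
  simp [e3, EuclideanSpace.single_apply]

lemma e3_apply_self (i : Fin 3) : (e3 i : E3) i = 1 := by simp [e3_apply]

lemma zeroE3_apply (i : Fin 3) : (0 : E3) i = 0 := rfl

lemma qfp_ibp (f g : E3 × E3 → ℝ) (d : E3 × E3) (hf : ContDiff ℝ (⊤ : ℕ∞) f) (hg : ContDiff ℝ (⊤ : ℕ∞) g)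
    (hgc : HasCompactSupport g) :
    ∫ p, f p * fderiv ℝ g p d = - ∫ p, fderiv ℝ f p d * g p := by
  have cf := hf.continuous
  have cg := hg.continuous
  have cf' : Continuous (fun p => fderiv ℝ f p d) :=
    (hf.continuous_fderiv (by simp)).clm_apply continuous_const
  have cg' : Continuous (fun p => fderiv ℝ g p d) :=
    (hg.continuous_fderiv (by simp)).clm_apply continuous_const
  refine integral_mul_fderiv_eq_neg_fderiv_mul_of_integrable ?_ ?_ ?_
    (fun x _ => hf.differentiable (by simp) x) (fun x _ => hg.differentiable (by simp) x)
  · exact ((cf'.mul cg).integrable_of_hasCompactSupport (hgc.mul_left))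
  · exact ((cf.mul cg').integrable_of_hasCompactSupport ((hgc.fderiv_apply ℝ d).mul_left))
  · exact ((cf.mul cg).integrable_of_hasCompactSupport (hgc.mul_left))

/-- The square trick: `∫ w u ∂u = -(1/2) ∫ (∂w) u²`. -/
lemma qfp_key (u : E3 × E3 → ℝ) (hu : ContDiff ℝ (⊤ : ℕ∞) u) (hcs : HasCompactSupport u)
    (w : E3 × E3 → ℝ) (hw : ContDiff ℝ (⊤ : ℕ∞) w) (d : E3 × E3) :
    ∫ p, w p * u p * fderiv ℝ u p d = -(1/2) * ∫ p, fderiv ℝ w p d * (u p)^2 := by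
  have cu := hu.continuous
  have cw := hw.continuous
  have cu' : Continuous (fun p => fderiv ℝ u p d) :=
    (hu.continuous_fderiv (by simp)).clm_apply continuous_const
  have cw' : Continuous (fun p => fderiv ℝ w p d) :=
    (hw.continuous_fderiv (by simp)).clm_apply continuous_const
  have h := qfp_ibp (fun p => w p * u p) u d (hw.mul hu) hu hcs
  have hmul : ∀ p : E3 × E3, fderiv ℝ (fun p => w p * u p) p d
      = w p * fderiv ℝ u p d + u p * fderiv ℝ w p d := by
    intro p
    rw [show (fun p => w p * u p) = w * u from rfl, fderiv_mul ((hw.differentiable (by simp)) p) ((hu.differentiable (by simp)) p)]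
    simp
  have int1 : Integrable (fun p => w p * u p * fderiv ℝ u p d) :=
    ((cw.mul cu).mul cu').integrable_of_hasCompactSupport ((hcs.fderiv_apply ℝ d).mul_left)
  have int2 : Integrable (fun p => fderiv ℝ w p d * (u p)^2) :=
    (cw'.mul (cu.pow 2)).integrable_of_hasCompactSupport
      ((hcs.comp_left (g := fun x : ℝ => x^2) (by simp) : HasCompactSupport (fun p => (u p)^2)).mul_left)
  have h2 : (∫ p, fderiv ℝ (fun p => w p * u p) p d * u p)
      = (∫ p, w p * u p * fderiv ℝ u p d) + ∫ p, fderiv ℝ w p d * (u p)^2 := by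
    rw [← integral_add int1 int2]
    congr 1
    funext p
    rw [hmul p]
    ring
  have h3 : (∫ p, w p * u p * fderiv ℝ u p d)
      = -((∫ p, w p * u p * fderiv ℝ u p d) + ∫ p, fderiv ℝ w p d * (u p)^2) := by
    rw [← h2]; exact h
  linarith [h3]

lemma E1 (u : E3 × E3 → ℝ) (hu : ContDiff ℝ (⊤ : ℕ∞) u) (hcs : HasCompactSupport u) (i j : Fin 3) :
    ∫ p : E3 × E3, (p.2 i)^4 * u p * (p.2 j * fderiv ℝ u p (e3 j, 0)) = 0 := by
  have hrw : (fun p : E3 × E3 => (p.2 i)^4 * u p * (p.2 j * fderiv ℝ u p (e3 j, 0)))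
      = fun p : E3 × E3 => ((p.2 i)^4 * p.2 j) * u p * fderiv ℝ u p (e3 j, 0) := by
    funext p; ring
  rw [hrw, qfp_key u hu hcs (fun p : E3 × E3 => (p.2 i)^4 * p.2 j)
    (((contDiff_coord i).pow 4).mul (contDiff_coord j)) (e3 j, 0)]
  have h0 : ∀ p : E3 × E3,
      fderiv ℝ (fun q : E3 × E3 => (q.2 i)^4 * q.2 j) p (e3 j, (0 : E3)) * (u p)^2 = 0 := by
    intro p; rw [fderiv_coord_pow_mul]; simp [zeroE3_apply]
  rw [show (fun p : E3 × E3 =>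
      fderiv ℝ (fun q : E3 × E3 => (q.2 i)^4 * q.2 j) p (e3 j, (0:E3)) * (u p)^2)
      = fun _ => (0:ℝ) from funext h0]
  simp

lemma E2 (u : E3 × E3 → ℝ) (hu : ContDiff ℝ (⊤ : ℕ∞) u) (hcs : HasCompactSupport u) (i j : Fin 3) :
    ∫ p : E3 × E3, (p.2 i)^4 * u p * fderiv ℝ (fun q : E3 × E3 => q.2 j * u q) p (0, e3 j)
      = (if i = j then -(3:ℝ)/2 else 1/2) * ∫ p : E3 × E3, (p.2 i)^4 * (u p)^2 := by
  have cu := hu.continuous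
  have cu' : Continuous (fun p : E3 × E3 => fderiv ℝ u p ((0:E3), e3 j)) :=
    (hu.continuous_fderiv (by simp)).clm_apply continuous_const
  have hrw : (fun p : E3 × E3 =>
        (p.2 i)^4 * u p * fderiv ℝ (fun q : E3 × E3 => q.2 j * u q) p (0, e3 j))
      = fun p : E3 × E3 => (p.2 i)^4 * (u p)^2
          + ((p.2 i)^4 * p.2 j) * u p * fderiv ℝ u p ((0:E3), e3 j) := by
    funext p
    rw [fderiv_coord_mul_fun u hu]
    simp only [e3_apply_self]
    ring
  have int1 : Integrable (fun p : E3 × E3 => (p.2 i)^4 * (u p)^2) :=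
    ((((contDiff_coord i).continuous).pow 4).mul (cu.pow 2)).integrable_of_hasCompactSupport
      ((hcs.comp_left (g := fun x : ℝ => x^2) (by simp) : HasCompactSupport (fun p => (u p)^2)).mul_left)
  have int2 : Integrable
      (fun p : E3 × E3 => ((p.2 i)^4 * p.2 j) * u p * fderiv ℝ u p ((0:E3), e3 j)) :=
    (((((contDiff_coord i).continuous).pow 4).mul
      ((contDiff_coord j).continuous)).mul cu |>.mul cu').integrable_of_hasCompactSupport
      ((hcs.fderiv_apply ℝ _).mul_left)
  rw [hrw, integral_add int1 int2,
    qfp_key u hu hcs (fun p : E3 × E3 => (p.2 i)^4 * p.2 j)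
      (((contDiff_coord i).pow 4).mul (contDiff_coord j)) ((0:E3), e3 j)]
  by_cases hij : i = j
  · subst hij
    have h5 : (fun p : E3 × E3 =>
        fderiv ℝ (fun q : E3 × E3 => (q.2 i)^4 * q.2 i) p ((0:E3), e3 i) * (u p)^2)
        = fun p : E3 × E3 => 5 * ((p.2 i)^4 * (u p)^2) := by
      funext p; rw [fderiv_coord_pow_mul]; norm_num [e3_apply]; ring
    rw [h5, integral_const_mul]
    norm_num
    ring
  · have h1 : (fun p : E3 × E3 =>
        fderiv ℝ (fun q : E3 × E3 => (q.2 i)^4 * q.2 j) p ((0:E3), e3 j) * (u p)^2)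
        = fun p : E3 × E3 => (p.2 i)^4 * (u p)^2 := by
      funext p; rw [fderiv_coord_pow_mul]
      simp [e3_apply, hij]
    rw [h1]
    simp only [if_neg hij]
    ring

lemma Egen (u : E3 × E3 → ℝ) (hu : ContDiff ℝ (⊤ : ℕ∞) u) (hcs : HasCompactSupport u) (i : Fin 3)
    (d d' : E3 × E3) :
    ∫ p : E3 × E3, (p.2 i)^4 * u p * fderiv ℝ (fun q : E3 × E3 => fderiv ℝ u q d) p d'
      = -(∫ p : E3 × E3, (4 * (p.2 i)^3 * d'.2 i) * u p * fderiv ℝ u p d)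
        - ∫ p : E3 × E3, (p.2 i)^4 * (fderiv ℝ u p d' * fderiv ℝ u p d) := by
  have cu := hu.continuous
  have ci := (contDiff_coord i).continuous
  have cDd : Continuous (fun q : E3 × E3 => fderiv ℝ u q d) :=
    (hu.continuous_fderiv (by simp)).clm_apply continuous_const
  have cDd' : Continuous (fun q : E3 × E3 => fderiv ℝ u q d') :=
    (hu.continuous_fderiv (by simp)).clm_apply continuous_const
  have h := qfp_ibp (fun p : E3 × E3 => (p.2 i)^4 * u p) (fun q : E3 × E3 => fderiv ℝ u q d) d'
    (((contDiff_coord i).pow 4).mul hu)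
    ((hu.fderiv_right (by simp)).clm_apply contDiff_const) (hcs.fderiv_apply ℝ d)
  rw [h]
  have hsplit : (fun p : E3 × E3 =>
      fderiv ℝ (fun p : E3 × E3 => (p.2 i)^4 * u p) p d' * fderiv ℝ u p d)
      = fun p : E3 × E3 => (4 * (p.2 i)^3 * d'.2 i) * u p * fderiv ℝ u p d
          + (p.2 i)^4 * (fderiv ℝ u p d' * fderiv ℝ u p d) := by
    funext p
    rw [fderiv_pow_mul_fun u hu]
    push_cast
    ring
  have intA : Integrable (fun p : E3 × E3 => (4 * (p.2 i)^3 * d'.2 i) * u p * fderiv ℝ u p d) :=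
    ((((continuous_const.mul (ci.pow 3)).mul continuous_const).mul cu).mul
      cDd).integrable_of_hasCompactSupport ((hcs.fderiv_apply ℝ d).mul_left)
  have intB : Integrable
      (fun p : E3 × E3 => (p.2 i)^4 * (fderiv ℝ u p d' * fderiv ℝ u p d)) :=
    ((ci.pow 4).mul (cDd'.mul cDd)).integrable_of_hasCompactSupport
      (((hcs.fderiv_apply ℝ d).mul_left).mul_left)
  rw [hsplit, integral_add intA intB]
  ring

lemma Esigma (u : E3 × E3 → ℝ) (hu : ContDiff ℝ (⊤ : ℕ∞) u) (hcs : HasCompactSupport u) (i j : Fin 3) :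
    ∫ p : E3 × E3, (p.2 i)^4 * u p * fderiv ℝ (fun q : E3 × E3 => fderiv ℝ u q (0, e3 j)) p (0, e3 j)
      = -(∫ p : E3 × E3, (p.2 i)^4 * (fderiv ℝ u p ((0:E3), e3 j))^2)
        + (if i = j then (6:ℝ) * ∫ p : E3 × E3, (p.2 i)^2 * (u p)^2 else 0) := by
  rw [Egen u hu hcs i ((0:E3), e3 j) ((0:E3), e3 j)]
  have hB : (fun p : E3 × E3 =>
      (p.2 i)^4 * (fderiv ℝ u p ((0:E3), e3 j) * fderiv ℝ u p ((0:E3), e3 j)))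
      = fun p : E3 × E3 => (p.2 i)^4 * (fderiv ℝ u p ((0:E3), e3 j))^2 := by
    funext p; ring
  by_cases hij : i = j
  · subst hij
    have hA : (fun p : E3 × E3 =>
        (4 * (p.2 i)^3 * (((0:E3), e3 i) : E3 × E3).2 i) * u p * fderiv ℝ u p ((0:E3), e3 i))
        = fun p : E3 × E3 => 4 * ((p.2 i)^3 * u p * fderiv ℝ u p ((0:E3), e3 i)) := by
      funext p; norm_num [e3_apply]; ring
    rw [hA, integral_const_mul,
      qfp_key u hu hcs (fun p : E3 × E3 => (p.2 i)^3) ((contDiff_coord i).pow 3) ((0:E3), e3 i)]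
    have h3 : (fun p : E3 × E3 =>
        fderiv ℝ (fun q : E3 × E3 => (q.2 i)^3) p ((0:E3), e3 i) * (u p)^2)
        = fun p : E3 × E3 => 3 * ((p.2 i)^2 * (u p)^2) := by
      funext p; rw [fderiv_coord_pow]; norm_num [e3_apply]; ring
    rw [h3, integral_const_mul, hB]
    norm_num
    ring
  · have hA0 : (fun p : E3 × E3 =>
        (4 * (p.2 i)^3 * (((0:E3), e3 j) : E3 × E3).2 i) * u p * fderiv ℝ u p ((0:E3), e3 j))
        = fun _ : E3 × E3 => (0:ℝ) := by
      funext p; simp [e3_apply, hij]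
    rw [hA0, hB]
    simp [hij]

lemma Egamma (u : E3 × E3 → ℝ) (hu : ContDiff ℝ (⊤ : ℕ∞) u) (hcs : HasCompactSupport u) (i j : Fin 3) :
    ∫ p : E3 × E3, (p.2 i)^4 * u p * fderiv ℝ (fun q : E3 × E3 => fderiv ℝ u q (e3 j, 0)) p (0, e3 j)
      = -∫ p : E3 × E3, (p.2 i)^4 * (fderiv ℝ u p ((0:E3), e3 j) * fderiv ℝ u p (e3 j, (0:E3))) := by
  rw [Egen u hu hcs i (e3 j, (0:E3)) ((0:E3), e3 j)]
  by_cases hij : i = j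
  · subst hij
    have hA : (fun p : E3 × E3 =>
        (4 * (p.2 i)^3 * (((0:E3), e3 i) : E3 × E3).2 i) * u p * fderiv ℝ u p (e3 i, (0:E3)))
        = fun p : E3 × E3 => 4 * ((p.2 i)^3 * u p * fderiv ℝ u p (e3 i, (0:E3))) := by
      funext p; norm_num [e3_apply]; ring
    rw [hA, integral_const_mul,
      qfp_key u hu hcs (fun p : E3 × E3 => (p.2 i)^3) ((contDiff_coord i).pow 3) (e3 i, (0:E3))]
    have h0 : (fun p : E3 × E3 =>
        fderiv ℝ (fun q : E3 × E3 => (q.2 i)^3) p (e3 i, (0:E3)) * (u p)^2)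
        = fun _ : E3 × E3 => (0:ℝ) := by
      funext p; rw [fderiv_coord_pow]; simp [zeroE3_apply]
    rw [h0]
    simp
  · have hA0 : (fun p : E3 × E3 =>
        (4 * (p.2 i)^3 * (((0:E3), e3 j) : E3 × E3).2 i) * u p * fderiv ℝ u p (e3 j, (0:E3)))
        = fun _ : E3 × E3 => (0:ℝ) := by
      funext p; simp [e3_apply, hij]
    rw [hA0]
    simp

lemma Ealpha (u : E3 × E3 → ℝ) (hu : ContDiff ℝ (⊤ : ℕ∞) u) (hcs : HasCompactSupport u) (i j : Fin 3) :
    ∫ p : E3 × E3, (p.2 i)^4 * u p * fderiv ℝ (fun q : E3 × E3 => fderiv ℝ u q (e3 j, 0)) p (e3 j, 0)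
      = -∫ p : E3 × E3, (p.2 i)^4 * (fderiv ℝ u p (e3 j, (0:E3)))^2 := by
  rw [Egen u hu hcs i (e3 j, (0:E3)) (e3 j, (0:E3))]
  have hB : (fun p : E3 × E3 =>
      (p.2 i)^4 * (fderiv ℝ u p (e3 j, (0:E3)) * fderiv ℝ u p (e3 j, (0:E3))))
      = fun p : E3 × E3 => (p.2 i)^4 * (fderiv ℝ u p (e3 j, (0:E3)))^2 := by
    funext p; ring
  have hA0 : (fun p : E3 × E3 =>
      (4 * (p.2 i)^3 * ((e3 j, (0:E3)) : E3 × E3).2 i) * u p * fderiv ℝ u p (e3 j, (0:E3)))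
      = fun _ : E3 × E3 => (0:ℝ) := by
    funext p; simp [zeroE3_apply]
  rw [hA0, hB]
  simp

lemma quad_int_nonneg (α γ σ : ℝ) (hσ : 0 < σ) (hcoeff : γ ^ 2 ≤ α * σ)
    (u : E3 × E3 → ℝ) (hu : ContDiff ℝ (⊤ : ℕ∞) u) (hcs : HasCompactSupport u) (i j : Fin 3) :
    0 ≤ α * (∫ p : E3 × E3, (p.2 i)^4 * (fderiv ℝ u p (e3 j, (0:E3)))^2)
      + 2 * γ * (∫ p : E3 × E3, (p.2 i)^4 * (fderiv ℝ u p ((0:E3), e3 j) * fderiv ℝ u p (e3 j, (0:E3))))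
      + σ * (∫ p : E3 × E3, (p.2 i)^4 * (fderiv ℝ u p ((0:E3), e3 j))^2) := by
  have ci := (contDiff_coord i).continuous
  have cX : Continuous (fun q : E3 × E3 => fderiv ℝ u q (e3 j, (0:E3))) :=
    (hu.continuous_fderiv (by simp)).clm_apply continuous_const
  have cV : Continuous (fun q : E3 × E3 => fderiv ℝ u q ((0:E3), e3 j)) :=
    (hu.continuous_fderiv (by simp)).clm_apply continuous_const
  have csX : HasCompactSupport (fun q : E3 × E3 => fderiv ℝ u q (e3 j, (0:E3))) :=
    hcs.fderiv_apply ℝ _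
  have csV : HasCompactSupport (fun q : E3 × E3 => fderiv ℝ u q ((0:E3), e3 j)) :=
    hcs.fderiv_apply ℝ _
  have intP5 : Integrable (fun p : E3 × E3 => (p.2 i)^4 * (fderiv ℝ u p (e3 j, (0:E3)))^2) :=
    ((ci.pow 4).mul (cX.pow 2)).integrable_of_hasCompactSupport
      ((csX.comp_left (g := fun x : ℝ => x^2) (by simp) :
        HasCompactSupport (fun p => (fderiv ℝ u p (e3 j, (0:E3)))^2)).mul_left)
  have intP4 : Integrable (fun p : E3 × E3 =>
      (p.2 i)^4 * (fderiv ℝ u p ((0:E3), e3 j) * fderiv ℝ u p (e3 j, (0:E3)))) :=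
    ((ci.pow 4).mul (cV.mul cX)).integrable_of_hasCompactSupport ((csX.mul_left).mul_left)
  have intP3 : Integrable (fun p : E3 × E3 => (p.2 i)^4 * (fderiv ℝ u p ((0:E3), e3 j))^2) :=
    ((ci.pow 4).mul (cV.pow 2)).integrable_of_hasCompactSupport
      ((csV.comp_left (g := fun x : ℝ => x^2) (by simp) :
        HasCompactSupport (fun p => (fderiv ℝ u p ((0:E3), e3 j))^2)).mul_left)
  have key : ∫ p : E3 × E3,
        (α * ((p.2 i)^4 * (fderiv ℝ u p (e3 j, (0:E3)))^2)
          + 2 * γ * ((p.2 i)^4 * (fderiv ℝ u p ((0:E3), e3 j) * fderiv ℝ u p (e3 j, (0:E3))))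
          + σ * ((p.2 i)^4 * (fderiv ℝ u p ((0:E3), e3 j))^2))
      = α * (∫ p : E3 × E3, (p.2 i)^4 * (fderiv ℝ u p (e3 j, (0:E3)))^2)
        + 2 * γ * (∫ p : E3 × E3, (p.2 i)^4 * (fderiv ℝ u p ((0:E3), e3 j) * fderiv ℝ u p (e3 j, (0:E3))))
        + σ * (∫ p : E3 × E3, (p.2 i)^4 * (fderiv ℝ u p ((0:E3), e3 j))^2) := by
    have h1 : Integrable (fun p : E3 × E3 =>
        α * ((p.2 i)^4 * (fderiv ℝ u p (e3 j, (0:E3)))^2)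
          + 2 * γ * ((p.2 i)^4 * (fderiv ℝ u p ((0:E3), e3 j) * fderiv ℝ u p (e3 j, (0:E3))))) :=
      (intP5.const_mul α).add (intP4.const_mul (2 * γ))
    rw [integral_add h1 (intP3.const_mul σ),
      integral_add (intP5.const_mul α) (intP4.const_mul (2 * γ)),
      integral_const_mul, integral_const_mul, integral_const_mul]
  rw [← key]
  refine integral_nonneg (fun p => ?_)
  show (0:ℝ) ≤ _
  have hφ : (0:ℝ) ≤ (p.2 i)^4 := by positivity
  have hq : (0:ℝ) ≤ α * (fderiv ℝ u p (e3 j, (0:E3)))^2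
      + 2 * γ * (fderiv ℝ u p ((0:E3), e3 j) * fderiv ℝ u p (e3 j, (0:E3)))
      + σ * (fderiv ℝ u p ((0:E3), e3 j))^2 := by
    nlinarith [sq_nonneg (σ * fderiv ℝ u p ((0:E3), e3 j) + γ * fderiv ℝ u p (e3 j, (0:E3))),
      mul_nonneg (sub_nonneg.2 hcoeff) (sq_nonneg (fderiv ℝ u p (e3 j, (0:E3)))), hσ,
      sq_nonneg (fderiv ℝ u p (e3 j, (0:E3))), sq_nonneg (fderiv ℝ u p ((0:E3), e3 j))]
  nlinarith [mul_nonneg hφ hq]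

/-- The weighted estimate `Σ_i ∫∫ v_i⁴ u Au ≤ 9σ ∫∫ u² + (3σ − β/2) Σ_i ∫∫ v_i⁴ u²`. -/
theorem Aop_weighted_estimate (α β γ σ : ℝ) (hα : 0 ≤ α) (hβ : 0 ≤ β) (hγ : 0 ≤ γ)
    (hσ : 0 < σ) (hcoeff : γ ^ 2 ≤ α * σ) :
    ∀ u : E3 × E3 → ℝ, ContDiff ℝ (⊤ : ℕ∞) u → HasCompactSupport u →
      (∑ i : Fin 3, ∫ p : E3 × E3, (p.2 i) ^ 4 * u p * Aop α β γ σ u p) ≤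
        9 * σ * (∫ p : E3 × E3, (u p) ^ 2) +
          (3 * σ - β / 2) * ∑ i : Fin 3, ∫ p : E3 × E3, (p.2 i) ^ 4 * (u p) ^ 2 := by
  intro u hu hcs
  have cu := hu.continuous
  have ci : ∀ i : Fin 3, Continuous (fun p : E3 × E3 => p.2 i) :=
    fun i => (contDiff_coord i).continuous
  have cD : ∀ d : E3 × E3, Continuous (fun q : E3 × E3 => fderiv ℝ u q d) :=
    fun d => (hu.continuous_fderiv (by simp)).clm_apply continuous_const
  have sD : ∀ d : E3 × E3, ContDiff ℝ (⊤ : ℕ∞) (fun q : E3 × E3 => fderiv ℝ u q d) :=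
    fun d => (hu.fderiv_right (by simp)).clm_apply contDiff_const
  have cDD : ∀ d d' : E3 × E3, Continuous
      (fun q : E3 × E3 => fderiv ℝ (fun r : E3 × E3 => fderiv ℝ u r d) q d') :=
    fun d d' => ((sD d).continuous_fderiv (by simp)).clm_apply continuous_const
  have cB : ∀ j : Fin 3, Continuous
      (fun p : E3 × E3 => fderiv ℝ (fun q : E3 × E3 => q.2 j * u q) p ((0:E3), e3 j)) :=
    fun j => (((contDiff_coord j).mul hu).continuous_fderiv (by simp)).clm_apply continuous_const
  have csu2 : HasCompactSupport (fun p : E3 × E3 => (u p)^2) :=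
    hcs.comp_left (g := fun x : ℝ => x^2) (by simp)
  have intU : Integrable (fun p : E3 × E3 => (u p)^2) :=
    (cu.pow 2).integrable_of_hasCompactSupport csu2
  have intJ : ∀ i : Fin 3, Integrable (fun p : E3 × E3 => (p.2 i)^4 * (u p)^2) :=
    fun i => (((ci i).pow 4).mul (cu.pow 2)).integrable_of_hasCompactSupport csu2.mul_left
  have intK : ∀ i : Fin 3, Integrable (fun p : E3 × E3 => (p.2 i)^2 * (u p)^2) :=
    fun i => (((ci i).pow 2).mul (cu.pow 2)).integrable_of_hasCompactSupport csu2.mul_left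
  have int1 : ∀ i j : Fin 3, Integrable
      (fun p : E3 × E3 => (p.2 i)^4 * u p * (p.2 j * fderiv ℝ u p (e3 j, 0))) :=
    fun i j => ((((ci i).pow 4).mul cu).mul
      ((ci j).mul (cD _))).integrable_of_hasCompactSupport ((hcs.mul_left).mul_right)
  have int2 : ∀ i j : Fin 3, Integrable (fun p : E3 × E3 =>
      (p.2 i)^4 * u p * fderiv ℝ (fun q : E3 × E3 => q.2 j * u q) p (0, e3 j)) :=
    fun i j => ((((ci i).pow 4).mul cu).mul (cB j)).integrable_of_hasCompactSupport
      ((hcs.mul_left).mul_right)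
  have intDD : ∀ (i : Fin 3) (d d' : E3 × E3), Integrable (fun p : E3 × E3 =>
      (p.2 i)^4 * u p * fderiv ℝ (fun q : E3 × E3 => fderiv ℝ u q d) p d') :=
    fun i d d' => ((((ci i).pow 4).mul cu).mul (cDD d d')).integrable_of_hasCompactSupport
      ((hcs.mul_left).mul_right)
  -- Pointwise expansion of the integrand
  have expand : ∀ i : Fin 3, (fun p : E3 × E3 => (p.2 i)^4 * u p * Aop α β γ σ u p)
      = fun p : E3 × E3 => ∑ j : Fin 3, (
          -((p.2 i)^4 * u p * (p.2 j * fderiv ℝ u p (e3 j, 0)))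
          + β * ((p.2 i)^4 * u p * fderiv ℝ (fun q : E3 × E3 => q.2 j * u q) p (0, e3 j))
          + σ * ((p.2 i)^4 * u p * fderiv ℝ (fun q : E3 × E3 => fderiv ℝ u q (0, e3 j)) p (0, e3 j))
          + 2 * γ * ((p.2 i)^4 * u p
              * fderiv ℝ (fun q : E3 × E3 => fderiv ℝ u q (e3 j, 0)) p (0, e3 j))
          + α * ((p.2 i)^4 * u p
              * fderiv ℝ (fun q : E3 × E3 => fderiv ℝ u q (e3 j, 0)) p (e3 j, 0))) := by
    intro i; funext p
    simp only [Aop, Fin.sum_univ_three]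
    ring
  -- Value of each weighted integral
  have Ival : ∀ i : Fin 3, (∫ p : E3 × E3, (p.2 i)^4 * u p * Aop α β γ σ u p)
      = ∑ j : Fin 3, (
          -(0:ℝ)
          + β * ((if i = j then -(3:ℝ)/2 else 1/2) * ∫ p : E3 × E3, (p.2 i)^4 * (u p)^2)
          + σ * (-(∫ p : E3 × E3, (p.2 i)^4 * (fderiv ℝ u p ((0:E3), e3 j))^2)
              + (if i = j then (6:ℝ) * ∫ p : E3 × E3, (p.2 i)^2 * (u p)^2 else 0))
          + 2 * γ * (-∫ p : E3 × E3,
              (p.2 i)^4 * (fderiv ℝ u p ((0:E3), e3 j) * fderiv ℝ u p (e3 j, (0:E3))))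
          + α * (-∫ p : E3 × E3, (p.2 i)^4 * (fderiv ℝ u p (e3 j, (0:E3)))^2)) := by
    intro i
    rw [expand i, integral_finset_sum]
    swap
    · intro j _
      exact ((((int1 i j).neg.add ((int2 i j).const_mul β)).add
        ((intDD i _ _).const_mul σ)).add ((intDD i _ _).const_mul (2 * γ))).add
        ((intDD i _ _).const_mul α)
    refine Finset.sum_congr rfl (fun j _ => ?_)
    have h4 : Integrable (fun p : E3 × E3 =>
        -((p.2 i)^4 * u p * (p.2 j * fderiv ℝ u p (e3 j, 0)))
        + β * ((p.2 i)^4 * u p * fderiv ℝ (fun q : E3 × E3 => q.2 j * u q) p (0, e3 j))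
        + σ * ((p.2 i)^4 * u p * fderiv ℝ (fun q : E3 × E3 => fderiv ℝ u q (0, e3 j)) p (0, e3 j))
        + 2 * γ * ((p.2 i)^4 * u p
            * fderiv ℝ (fun q : E3 × E3 => fderiv ℝ u q (e3 j, 0)) p (0, e3 j))) :=
      (((int1 i j).neg.add ((int2 i j).const_mul β)).add
        ((intDD i _ _).const_mul σ)).add ((intDD i _ _).const_mul (2 * γ))
    have h3 : Integrable (fun p : E3 × E3 =>
        -((p.2 i)^4 * u p * (p.2 j * fderiv ℝ u p (e3 j, 0)))
        + β * ((p.2 i)^4 * u p * fderiv ℝ (fun q : E3 × E3 => q.2 j * u q) p (0, e3 j))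
        + σ * ((p.2 i)^4 * u p
            * fderiv ℝ (fun q : E3 × E3 => fderiv ℝ u q (0, e3 j)) p (0, e3 j))) :=
      ((int1 i j).neg.add ((int2 i j).const_mul β)).add ((intDD i _ _).const_mul σ)
    have h2 : Integrable (fun p : E3 × E3 =>
        -((p.2 i)^4 * u p * (p.2 j * fderiv ℝ u p (e3 j, 0)))
        + β * ((p.2 i)^4 * u p * fderiv ℝ (fun q : E3 × E3 => q.2 j * u q) p (0, e3 j))) :=
      (int1 i j).neg.add ((int2 i j).const_mul β)
    have hneg : Integrable (fun p : E3 × E3 =>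
        -((p.2 i)^4 * u p * (p.2 j * fderiv ℝ u p (e3 j, 0)))) := (int1 i j).neg
    rw [integral_add h4 ((intDD i _ _).const_mul α),
      integral_add h3 ((intDD i _ _).const_mul (2 * γ)),
      integral_add h2 ((intDD i _ _).const_mul σ),
      integral_add hneg ((int2 i j).const_mul β),
      integral_neg, integral_const_mul, integral_const_mul, integral_const_mul, integral_const_mul,
      E1 u hu hcs i j, E2 u hu hcs i j, Esigma u hu hcs i j, Egamma u hu hcs i j,
      Ealpha u hu hcs i j]
  -- Per-i bound
  have Ibound : ∀ i : Fin 3, (∫ p : E3 × E3, (p.2 i)^4 * u p * Aop α β γ σ u p)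
      ≤ -(β/2) * (∫ p : E3 × E3, (p.2 i)^4 * (u p)^2)
        + 6 * σ * (∫ p : E3 × E3, (p.2 i)^2 * (u p)^2) := by
    intro i
    rw [Ival i]
    have step : ∀ j : Fin 3, (
          -(0:ℝ)
          + β * ((if i = j then -(3:ℝ)/2 else 1/2) * ∫ p : E3 × E3, (p.2 i)^4 * (u p)^2)
          + σ * (-(∫ p : E3 × E3, (p.2 i)^4 * (fderiv ℝ u p ((0:E3), e3 j))^2)
              + (if i = j then (6:ℝ) * ∫ p : E3 × E3, (p.2 i)^2 * (u p)^2 else 0))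
          + 2 * γ * (-∫ p : E3 × E3,
              (p.2 i)^4 * (fderiv ℝ u p ((0:E3), e3 j) * fderiv ℝ u p (e3 j, (0:E3))))
          + α * (-∫ p : E3 × E3, (p.2 i)^4 * (fderiv ℝ u p (e3 j, (0:E3)))^2))
        ≤ β * ((if i = j then -(3:ℝ)/2 else 1/2) * ∫ p : E3 × E3, (p.2 i)^4 * (u p)^2)
          + σ * (if i = j then (6:ℝ) * ∫ p : E3 × E3, (p.2 i)^2 * (u p)^2 else 0) := by
      intro j
      have hq := quad_int_nonneg α γ σ hσ hcoeff u hu hcs i j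
      nlinarith [hq, hσ.le]
    calc (∑ j : Fin 3, _) ≤ ∑ j : Fin 3,
          (β * ((if i = j then -(3:ℝ)/2 else 1/2) * ∫ p : E3 × E3, (p.2 i)^4 * (u p)^2)
            + σ * (if i = j then (6:ℝ) * ∫ p : E3 × E3, (p.2 i)^2 * (u p)^2 else 0)) :=
        Finset.sum_le_sum (fun j _ => step j)
      _ = -(β/2) * (∫ p : E3 × E3, (p.2 i)^4 * (u p)^2)
            + 6 * σ * (∫ p : E3 × E3, (p.2 i)^2 * (u p)^2) := by
        fin_cases i <;> (simp [Fin.sum_univ_three]; ring)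
  -- Bound on the K-moment
  have Kb : ∀ i : Fin 3, 6 * σ * (∫ p : E3 × E3, (p.2 i)^2 * (u p)^2)
      ≤ 3 * σ * (∫ p : E3 × E3, (u p)^2) + 3 * σ * (∫ p : E3 × E3, (p.2 i)^4 * (u p)^2) := by
    intro i
    have hle : (fun p : E3 × E3 => 6 * σ * ((p.2 i)^2 * (u p)^2))
        ≤ fun p : E3 × E3 => 3 * σ * (u p)^2 + 3 * σ * ((p.2 i)^4 * (u p)^2) := by
      intro p
      have h0 : 0 ≤ σ * ((u p)^2 * ((p.2 i)^2 - 1)^2) := by positivity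
      dsimp only
      nlinarith [h0]
    have hg : Integrable (fun p : E3 × E3 =>
        3 * σ * (u p)^2 + 3 * σ * ((p.2 i)^4 * (u p)^2)) :=
      (intU.const_mul (3 * σ)).add ((intJ i).const_mul (3 * σ))
    have h := integral_mono ((intK i).const_mul (6 * σ)) hg hle
    rw [integral_add (intU.const_mul (3 * σ)) ((intJ i).const_mul (3 * σ)),
      integral_const_mul, integral_const_mul, integral_const_mul] at h
    exact h
  calc (∑ i : Fin 3, ∫ p : E3 × E3, (p.2 i) ^ 4 * u p * Aop α β γ σ u p)
      ≤ ∑ i : Fin 3, (-(β/2) * (∫ p : E3 × E3, (p.2 i)^4 * (u p)^2)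
          + (3 * σ * (∫ p : E3 × E3, (u p)^2)
            + 3 * σ * (∫ p : E3 × E3, (p.2 i)^4 * (u p)^2))) :=
      Finset.sum_le_sum (fun i _ => by linarith [Ibound i, Kb i])
    _ = 9 * σ * (∫ p : E3 × E3, (u p) ^ 2) +
          (3 * σ - β / 2) * ∑ i : Fin 3, ∫ p : E3 × E3, (p.2 i) ^ 4 * (u p) ^ 2 := by
      rw [Fin.sum_univ_three, Fin.sum_univ_three]
      ring

end
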